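/- Let ω = exp(2πi/m), and represent elements of G = C_m ≀ S_n as generalized permutations π = (π(1),...,π(n)) with π(i) = ω^{c_i} · σ(i) for some σ ∈ S_n and 0 ≤ c_i < m. With the linear order 1·ω^{m-1} < ... < n·ω^{m-1} < ... < 1·ω < ... < n·ω < 1 < ... < n on the alphabet {j·ω^c}, for every π ∈ G: flag-major(π) = m · maj(π) + Σ_{j=0}^{m-1} j · #{i : π(i)/|π(i)| = ω^j}, where maj(π) = Σ{i : π(i) > π(i+1)} with respect to this order. -/

import Mathlib

open Finset

@[ext]
structure GenPerm (m n : ℕ) where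
  σ : Equiv.Perm (Fin n)
  c : Fin n → ZMod m
deriving DecidableEq

namespace GenPerm

variable {m n : ℕ}

instance [NeZero m] : Fintype (GenPerm m n) :=
  Fintype.ofEquiv (Equiv.Perm (Fin n) × (Fin n → ZMod m))
    { toFun := fun p => ⟨p.1, p.2⟩
      invFun := fun g => (g.σ, g.c)
      left_inv := fun p => rfl
      right_inv := fun g => rfl }

instance : Mul (GenPerm m n) := ⟨fun g h => ⟨g.σ * h.σ, fun j => g.c (h.σ j) + h.c j⟩⟩
instance : One (GenPerm m n) := ⟨⟨1, 0⟩⟩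
instance : Inv (GenPerm m n) := ⟨fun g => ⟨g.σ⁻¹, fun j => - g.c (g.σ⁻¹ j)⟩⟩

@[simp] lemma mul_σ (g h : GenPerm m n) : (g * h).σ = g.σ * h.σ := rfl
@[simp] lemma mul_c (g h : GenPerm m n) (j : Fin n) : (g * h).c j = g.c (h.σ j) + h.c j := rfl
@[simp] lemma one_σ : (1 : GenPerm m n).σ = 1 := rfl
@[simp] lemma one_c (j : Fin n) : (1 : GenPerm m n).c j = 0 := rfl
@[simp] lemma inv_σ (g : GenPerm m n) : (g⁻¹).σ = g.σ⁻¹ := rfl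
@[simp] lemma inv_c (g : GenPerm m n) (j : Fin n) : (g⁻¹).c j = - g.c (g.σ⁻¹ j) := rfl

instance : Group (GenPerm m n) where
  mul_assoc a b c := by
    ext j
    · simp [mul_assoc]
    · simp [add_assoc]
  one_mul a := by
    ext j
    · simp
    · simp
  mul_one a := by
    ext j
    · simp
    · simp
  inv_mul_cancel a := by
    ext j
    · simp
    · simp

/-- The generator `s i`: `s 0` multiplies the first letter's phase by `ω`;
for `1 ≤ i < n`, `s i` swaps positions `i` and `i+1` (1-indexed), i.e. `i-1` and `i`
(0-indexed). -/
def s (i : ℕ) : GenPerm m n :=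
  if h : i < n then
    if h0 : i = 0 then ⟨1, fun j => if j = ⟨0, by omega⟩ then 1 else 0⟩
    else ⟨Equiv.swap ⟨i - 1, by omega⟩ ⟨i, h⟩, 0⟩
  else 1

/-- `t i = s i * s (i-1) * ⋯ * s 1 * s 0`. -/
def t (i : ℕ) : GenPerm m n := ((List.range (i + 1)).map (fun j => (s (i - j) : GenPerm m n))).prod

/-- `rep k = t (n-1) ^ k (n-1) * ⋯ * t 0 ^ k 0`. -/
def rep (k : Fin n → ℕ) : GenPerm m n :=
  (List.ofFn (fun i : Fin n => (t (i : ℕ) : GenPerm m n) ^ k i)).reverse.prod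

open scoped Classical in
/-- The flag major index: the sum of the exponents in the canonical representation
`π = t (n-1) ^ k (n-1) * ⋯ * t 0 ^ k 0` with `0 ≤ k i < m * (i+1)`. -/
noncomputable def flagMajor (π : GenPerm m n) : ℕ :=
  if h : ∃ k : Fin n → ℕ, (∀ i : Fin n, k i < m * ((i : ℕ) + 1)) ∧ π = rep k
  then ∑ i, h.choose i else 0

/-- The major index of a generalized permutation with respect to the linear order
`1·ω^{m-1} < ⋯ < n·ω^{m-1} < ⋯ < 1·ω < ⋯ < n·ω < 1 < ⋯ < n`
(a 1-indexed descent at position `i` contributes `i`). -/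
def majG (π : GenPerm m n) : ℕ :=
  ∑ i ∈ Finset.range n, if h : i + 1 < n then
    (if (π.c ⟨i, by omega⟩).val < (π.c ⟨i + 1, h⟩).val ∨
        (π.c ⟨i, by omega⟩ = π.c ⟨i + 1, h⟩ ∧ π.σ ⟨i + 1, h⟩ < π.σ ⟨i, by omega⟩)
     then i + 1 else 0) else 0

/-- Coxeter length with respect to the generators `s 0, s 1, …, s (n-1)`. -/
noncomputable def len (π : GenPerm m n) : ℕ :=
  sInf {l | ∃ w : List (Fin n), w.length = l ∧ (w.map (fun i => (s (i : ℕ) : GenPerm m n))).prod = π}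

/-!
Write `fmaj π = m · maj π + Σ colours`. Every element of the copy `G_{i+1}` of `C_m ≀ S_{i+1}`
on the first `i + 1` positions is uniquely `t_i ^ a * ρ` with `ρ ∈ G_i` and `a < m (i + 1)`:
the entry of `t_i ^ a * ρ` at position `i` is that of `t_i ^ a`, which encodes `a`.
Left multiplication by `t_i` relabels the letters `0 ↦ i ↦ i - 1 ↦ ⋯ ↦ 1 ↦ 0` and colours the
letter `0`, so it changes the relative order of the entries only at the position `P` of `0`.
Either the colour of `0` goes up by one and no descent moves, or it wraps from `m - 1` to `0`:
then `0` jumps from the smallest letter to the largest one among the first `i + 1` positions, the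
descent at `P - 1` moves to `P`, and `m · maj` gains `m` while the colour sum loses `m - 1`.
So each factor `t_i` raises `fmaj` by one, as long as the letter `0` of colour `m - 1` does not
sit at position `i`, which the bound `a < m (i + 1)` rules out. Hence `fmaj` of
`t_{n-1} ^ k_{n-1} ⋯ t_0 ^ k_0` is `Σ k_i`.
-/

lemma _root_.ZMod.val_add_one_eq_ite [NeZero m] (x : ZMod m) :
    (x + 1).val = if x.val = m - 1 then 0 else x.val + 1 := by
  have hx := ZMod.val_lt x
  rw [ZMod.val_add, ZMod.val_one_eq_one_mod]
  rcases Nat.lt_or_ge 1 m with h | h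
  · rw [Nat.mod_eq_of_lt h]
    split_ifs with h2
    · rw [show x.val + 1 = m by omega, Nat.mod_self]
    · exact Nat.mod_eq_of_lt (by omega)
  · obtain rfl : m = 1 := by have := NeZero.ne m; omega
    split_ifs <;> omega

lemma _root_.Nat.mul_sub_one_add_self (a : ℕ) {b : ℕ} (hb : 1 ≤ b) : a * (b - 1) + a = b * a := by
  rw [← Nat.mul_succ, Nat.succ_eq_add_one, Nat.sub_add_cancel hb, mul_comm]

lemma s_zero (hn : 0 < n) :
    (s 0 : GenPerm m n) = ⟨1, fun j => if j = ⟨0, hn⟩ then 1 else 0⟩ := by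
  rw [s, dif_pos hn, dif_pos rfl]

lemma s_of_ne_zero {i : ℕ} (hi : i < n) (h0 : i ≠ 0) :
    (s i : GenPerm m n) = ⟨Equiv.swap ⟨i - 1, by omega⟩ ⟨i, hi⟩, 0⟩ := by
  rw [s, dif_pos hi, dif_neg h0]

lemma t_zero : (t 0 : GenPerm m n) = s 0 := by
  simp [t]

lemma t_succ (i : ℕ) : (t (i + 1) : GenPerm m n) = s (i + 1) * t i := by
  rw [t, t, List.range_succ_eq_map]
  simp only [List.map_cons, List.map_map, List.prod_cons]
  congr 2
  ext j
  simp

lemma t_σ_val {i : ℕ} (hi : i < n) (j : Fin n) :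
    ((t i : GenPerm m n).σ j).val =
      if j.val = 0 then i else if j.val ≤ i then j.val - 1 else j.val := by
  induction i with
  | zero =>
    rw [t_zero, s_zero (by omega), Equiv.Perm.one_apply]
    split_ifs <;> omega
  | succ i ih =>
    rw [t_succ, s_of_ne_zero hi (by omega)]
    simp only [mul_σ, Equiv.Perm.mul_apply, Equiv.swap_apply_def, apply_ite Fin.val,
      Fin.ext_iff, ih (by omega)]
    split_ifs <;> omega

lemma t_c {i : ℕ} (hi : i < n) (j : Fin n) :
    (t i : GenPerm m n).c j = if j.val = 0 then 1 else 0 := by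
  induction i with
  | zero =>
    rw [t_zero, s_zero (by omega)]
    simp only [Fin.ext_iff]
  | succ i ih =>
    rw [t_succ, s_of_ne_zero hi (by omega)]
    simp only [mul_c, Pi.zero_apply, zero_add]
    exact ih (by omega)

/-- The copy of `C_m ≀ S_N` inside `C_m ≀ S_n` acting on the first `N` positions. -/
def fixingFrom (N : ℕ) : Subgroup (GenPerm m n) where
  carrier := {π | ∀ j : Fin n, N ≤ j.val → π.σ j = j ∧ π.c j = 0}
  mul_mem' {π ρ} hπ hρ j hj := by
    simp [(hρ j hj).1, (hρ j hj).2, (hπ j hj).1, (hπ j hj).2]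
  one_mem' _ _ := ⟨rfl, rfl⟩
  inv_mem' {π} hπ j hj := by
    have hσ : π.σ⁻¹ j = j := by rw [Equiv.Perm.inv_eq_iff_eq, (hπ j hj).1]
    simp [hσ, (hπ j hj).2]

lemma fixingFrom_mono {N N' : ℕ} (h : N ≤ N') :
    (fixingFrom N : Subgroup (GenPerm m n)) ≤ fixingFrom N' :=
  fun _ hπ j hj => hπ j (h.trans hj)

lemma eq_of_le_σ_val {N : ℕ} {π : GenPerm m n} (hπ : π ∈ fixingFrom N) {j : Fin n}
    (hj : N ≤ (π.σ j).val) : π.σ j = j :=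
  π.σ.injective (hπ _ hj).1

lemma σ_val_lt {N : ℕ} {π : GenPerm m n} (hπ : π ∈ fixingFrom N) {j : Fin n}
    (hj : j.val < N) : (π.σ j).val < N := by
  by_contra h
  rw [eq_of_le_σ_val hπ (not_lt.mp h)] at h
  exact h hj

lemma c_eq_zero_of_le_σ_val {N : ℕ} {π : GenPerm m n} (hπ : π ∈ fixingFrom N) {j : Fin n}
    (hj : N ≤ (π.σ j).val) : π.c j = 0 :=
  (hπ j (eq_of_le_σ_val hπ hj ▸ hj)).2

lemma t_mem_fixingFrom (i : ℕ) : (t i : GenPerm m n) ∈ fixingFrom (i + 1) := by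
  intro j hj
  have hi : i < n := by omega
  exact ⟨Fin.ext (by rw [t_σ_val hi]; split_ifs <;> omega), by rw [t_c hi, if_neg (by omega)]⟩

/-- The entry at position `a` is smaller than the entry at position `b`, for the order
`1·ω^{m-1} < ⋯ < n·ω^{m-1} < ⋯ < 1 < ⋯ < n` in which a larger colour is a smaller letter. -/
def EntryLT (π : GenPerm m n) (a b : Fin n) : Prop :=
  (π.c b).val < (π.c a).val ∨ (π.c b = π.c a ∧ π.σ a < π.σ b)

instance (π : GenPerm m n) (a b : Fin n) : Decidable (π.EntryLT a b) := by
  unfold EntryLT; infer_instance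

lemma entryLT_iff [NeZero m] (π : GenPerm m n) (a b : Fin n) :
    π.EntryLT a b ↔ (π.c b).val < (π.c a).val ∨
      ((π.c b).val = (π.c a).val ∧ (π.σ a).val < (π.σ b).val) := by
  rw [EntryLT, (ZMod.val_injective m).eq_iff.symm, Fin.lt_def]

def descentTerm (π : GenPerm m n) (p : ℕ) : ℕ :=
  if h : p + 1 < n then (if π.EntryLT ⟨p + 1, h⟩ ⟨p, by omega⟩ then p + 1 else 0) else 0

lemma majG_eq_sum_descentTerm (π : GenPerm m n) :
    majG π = ∑ p ∈ range n, π.descentTerm p := rfl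

lemma descentTerm_of_lt (π : GenPerm m n) {p : ℕ} (h : p + 1 < n) :
    π.descentTerm p = if π.EntryLT ⟨p + 1, h⟩ ⟨p, by omega⟩ then p + 1 else 0 :=
  dif_pos h

lemma majG_congr {π π' : GenPerm m n}
    (h : ∀ a b : Fin n, a ≠ b → (π'.EntryLT a b ↔ π.EntryLT a b)) : majG π' = majG π := by
  rw [majG_eq_sum_descentTerm, majG_eq_sum_descentTerm]
  refine sum_congr rfl fun p _ => ?_
  by_cases hp : p + 1 < n
  · rw [descentTerm_of_lt _ hp, descentTerm_of_lt _ hp,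
      if_congr (h _ _ (Fin.ne_of_val_ne (by simp))) rfl rfl]
  · rw [descentTerm, descentTerm, dif_neg hp, dif_neg hp]

lemma majG_one : majG (1 : GenPerm m n) = 0 := by
  rw [majG_eq_sum_descentTerm]
  refine sum_eq_zero fun p _ => ?_
  by_cases hp : p + 1 < n
  · rw [descentTerm_of_lt _ hp, if_neg]
    rintro (h | ⟨-, h⟩)
    · simp at h
    · simp [Fin.lt_def] at h
  · rw [descentTerm, dif_neg hp]

def colorSum (π : GenPerm m n) : ℕ := ∑ j, (π.c j).val

def fmaj (π : GenPerm m n) : ℕ := m * majG π + colorSum π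

lemma fmaj_one : fmaj (1 : GenPerm m n) = 0 := by
  simp [fmaj, majG_one, colorSum]

lemma colorSum_eq_sum_range [NeZero m] (π : GenPerm m n) :
    colorSum π = ∑ j ∈ range m, j * #{i | (π.c i).val = j} := by
  calc colorSum π = ∑ j ∈ range m, ∑ i with (π.c i).val = j, j :=
        (sum_fiberwise_of_maps_to' (fun i _ => mem_range.mpr (ZMod.val_lt (π.c i))) fun j => j).symm
    _ = _ := sum_congr rfl fun j _ => by rw [sum_const, smul_eq_mul, mul_comm]

section LeftMulT

variable {i : ℕ} {π : GenPerm m n}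

lemma t_mul_σ_val (hi : i < n) (j : Fin n) :
    ((t i * π).σ j).val = if (π.σ j).val = 0 then i
      else if (π.σ j).val ≤ i then (π.σ j).val - 1 else (π.σ j).val := by
  rw [mul_σ, Equiv.Perm.mul_apply, t_σ_val hi]

lemma t_mul_c (hi : i < n) (j : Fin n) :
    (t i * π).c j = (if (π.σ j).val = 0 then 1 else 0) + π.c j := by
  rw [mul_c, t_c hi]

lemma colorSum_t_mul (hi : i < n) {P : Fin n} (hP : (π.σ P).val = 0) :
    colorSum (t i * π) + (π.c P).val = colorSum π + (π.c P + 1).val := by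
  have hrest : ∑ j ∈ univ.erase P, ((t i * π).c j).val = ∑ j ∈ univ.erase P, (π.c j).val :=
    sum_congr rfl fun j hj => by
      rw [t_mul_c hi, if_neg fun h => ne_of_mem_erase hj (π.σ.injective
        (Fin.ext (h.trans hP.symm))), zero_add]
  rw [colorSum, colorSum, ← sum_erase_add _ _ (mem_univ P), ← sum_erase_add _ _ (mem_univ P),
    hrest, t_mul_c hi, if_pos hP, add_comm (1 : ZMod m)]
  ring

variable [NeZero m]

lemma entryLT_t_mul_iff (hi : i < n) {a b : Fin n} (ha : (π.σ a).val ≠ 0)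
    (hb : (π.σ b).val ≠ 0) : (t i * π).EntryLT a b ↔ π.EntryLT a b := by
  rw [entryLT_iff, entryLT_iff, t_mul_c hi, t_mul_c hi, if_neg ha, if_neg hb, zero_add,
    zero_add, t_mul_σ_val hi, t_mul_σ_val hi]
  split_ifs <;> omega

lemma entryLT_t_mul_iff_of_ne_wrap (hi : i < n) (hπ : π ∈ fixingFrom (i + 1)) {a b : Fin n}
    (ha : (π.σ a).val = 0) (hw : (π.c a).val ≠ m - 1) (hb : b ≠ a) :
    ((t i * π).EntryLT a b ↔ π.EntryLT a b) ∧ ((t i * π).EntryLT b a ↔ π.EntryLT b a) := by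
  have hb0 : (π.σ b).val ≠ 0 := fun h => hb (π.σ.injective (Fin.ext (h.trans ha.symm)))
  have hcb := ZMod.val_lt (π.c b)
  simp only [entryLT_iff, t_mul_c hi, t_mul_σ_val hi, if_pos ha, if_neg hb0, zero_add,
    add_comm (1 : ZMod m), ZMod.val_add_one_eq_ite, if_neg hw]
  rcases lt_or_ge i (π.σ b).val with h | h
  · have h0 : (π.c b).val = 0 := by rw [c_eq_zero_of_le_σ_val hπ h, ZMod.val_zero]
    split_ifs <;> omega
  · split_ifs <;> omega

lemma majG_t_mul_of_not_wrap (hi : i < n) (hπ : π ∈ fixingFrom (i + 1))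
    (hw : ∀ a, (π.σ a).val = 0 → (π.c a).val ≠ m - 1) : majG (t i * π) = majG π := by
  refine majG_congr fun a b hab => ?_
  by_cases ha : (π.σ a).val = 0
  · exact (entryLT_t_mul_iff_of_ne_wrap hi hπ ha (hw a ha) hab.symm).1
  by_cases hb : (π.σ b).val = 0
  · exact (entryLT_t_mul_iff_of_ne_wrap hi hπ hb (hw b hb) hab).2
  exact entryLT_t_mul_iff hi ha hb

lemma entryLT_of_wrap (hi : i < n) (hπ : π ∈ fixingFrom (i + 1)) {a b : Fin n}
    (ha : (π.σ a).val = 0) (hw : (π.c a).val = m - 1) (hb : b ≠ a) (hbi : b.val ≤ i) :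
    (π.EntryLT a b ∧ ¬ π.EntryLT b a) ∧ ((t i * π).EntryLT b a ∧ ¬ (t i * π).EntryLT a b) := by
  have hb0 : (π.σ b).val ≠ 0 := fun h => hb (π.σ.injective (Fin.ext (h.trans ha.symm)))
  have hσb : (π.σ b).val < i + 1 := σ_val_lt hπ (by omega)
  have hcb := ZMod.val_lt (π.c b)
  simp only [entryLT_iff, t_mul_c hi, t_mul_σ_val hi, if_pos ha, if_neg hb0, zero_add,
    add_comm (1 : ZMod m), ZMod.val_add_one_eq_ite, if_pos hw]
  split_ifs <;> omega

lemma descentTerm_t_mul_of_wrap (hi : i < n) (hπ : π ∈ fixingFrom (i + 1)) {P : Fin n}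
    (hP : (π.σ P).val = 0) (hw : (π.c P).val = m - 1) (hPi : P.val < i) (p : ℕ) :
    (t i * π).descentTerm p + (if p + 1 = P.val then P.val else 0) =
      π.descentTerm p + (if p = P.val then P.val + 1 else 0) := by
  by_cases hp : p + 1 < n
  swap
  · rw [descentTerm, descentTerm, dif_neg hp, dif_neg hp, if_neg (by omega), if_neg (by omega)]
  rw [descentTerm_of_lt _ hp, descentTerm_of_lt _ hp]
  by_cases hpP : p = P.val
  · subst hpP
    obtain ⟨⟨-, h⟩, h', -⟩ := entryLT_of_wrap hi hπ hP hw (b := ⟨P.val + 1, hp⟩)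
      (Fin.ne_of_val_ne (by simp)) (by simp only; omega)
    simp only [Fin.eta, if_pos h', if_neg h, if_true, if_neg (by omega : P.val + 1 ≠ P.val)]
    omega
  by_cases hpP' : p + 1 = P.val
  · have hPeq : (⟨p + 1, hp⟩ : Fin n) = P := Fin.ext hpP'
    obtain ⟨⟨h, -⟩, -, h'⟩ := entryLT_of_wrap hi hπ hP hw (b := ⟨p, by omega⟩)
      (Fin.ne_of_val_ne (by simp only; omega)) (by simp only; omega)
    rw [hPeq, if_pos h, if_neg h', if_pos hpP', if_neg hpP]
    omega
  · have hne : ∀ q : Fin n, q.val ≠ P.val → (π.σ q).val ≠ 0 := fun q hq h =>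
      hq (congrArg Fin.val (π.σ.injective (Fin.ext (h.trans hP.symm))))
    rw [if_congr (entryLT_t_mul_iff hi (hne _ hpP') (hne _ hpP)) rfl rfl, if_neg hpP,
      if_neg hpP']

lemma majG_t_mul_of_wrap (hi : i < n) (hπ : π ∈ fixingFrom (i + 1)) {P : Fin n}
    (hP : (π.σ P).val = 0) (hw : (π.c P).val = m - 1) (hPi : P.val < i) :
    majG (t i * π) = majG π + 1 := by
  have h := sum_congr rfl fun p (_ : p ∈ range n) =>
    descentTerm_t_mul_of_wrap hi hπ hP hw hPi p
  have hpred : ∑ p ∈ range n, (if p + 1 = P.val then P.val else 0) = P.val := by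
    obtain h0 | ⟨q, hq⟩ : P.val = 0 ∨ ∃ q, P.val = q + 1 := by
      rcases P.val with _ | q <;> simp
    · simp [h0]
    · simp only [hq, Nat.add_right_cancel_iff, sum_ite_eq', mem_range]
      rw [if_pos (by omega)]
  rw [sum_add_distrib, sum_add_distrib, hpred, sum_ite_eq', if_pos (mem_range.mpr P.isLt),
    ← majG_eq_sum_descentTerm, ← majG_eq_sum_descentTerm] at h
  omega

lemma fmaj_t_mul (hi : i < n) (hπ : π ∈ fixingFrom (i + 1))
    (hx : ¬((π.σ ⟨i, hi⟩).val = 0 ∧ (π.c ⟨i, hi⟩).val = m - 1)) :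
    fmaj (t i * π) = fmaj π + 1 := by
  obtain ⟨P, hP⟩ := π.σ.surjective ⟨0, by omega⟩
  have hP0 : (π.σ P).val = 0 := by rw [hP]
  have hsum := colorSum_t_mul hi hP0
  rw [ZMod.val_add_one_eq_ite] at hsum
  have hm := NeZero.pos m
  by_cases hw : (π.c P).val = m - 1
  · have hPi : P.val < i := by
      have hPle : P.val ≤ i := by
        by_contra h
        rw [(hπ P (by omega)).1] at hP0
        omega
      refine lt_of_le_of_ne hPle fun h => hx ?_
      rw [show (⟨i, hi⟩ : Fin n) = P from Fin.ext h.symm]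
      exact ⟨hP0, hw⟩
    rw [if_pos hw] at hsum
    rw [fmaj, fmaj, majG_t_mul_of_wrap hi hπ hP0 hw hPi, mul_add, mul_one]
    omega
  · have hw' : ∀ a, (π.σ a).val = 0 → (π.c a).val ≠ m - 1 := fun a ha => by
      rwa [π.σ.injective (Fin.ext (ha.trans hP0.symm))]
    rw [if_neg hw] at hsum
    rw [fmaj, fmaj, majG_t_mul_of_not_wrap hi hπ hw']
    omega

end LeftMulT

section Powers

variable {i : ℕ}

lemma t_pow_mul_apply_self (hi : i < n) {ρ : GenPerm m n} (hρ : ρ ∈ fixingFrom i) (a : ℕ) :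
    (t i ^ a * ρ).σ ⟨i, hi⟩ = (t i ^ a : GenPerm m n).σ ⟨i, hi⟩ ∧
      (t i ^ a * ρ).c ⟨i, hi⟩ = (t i ^ a : GenPerm m n).c ⟨i, hi⟩ := by
  obtain ⟨h1, h2⟩ := hρ ⟨i, hi⟩ le_rfl
  simp [h1, h2]

variable [NeZero m]

lemma t_pow_entry (hi : i < n) {a : ℕ} (ha : a < m * (i + 1)) :
    (i + 1) * ((t i ^ a : GenPerm m n).c ⟨i, hi⟩).val +
      (i - ((t i ^ a : GenPerm m n).σ ⟨i, hi⟩).val) = a := by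
  induction a with
  | zero => simp
  | succ a ih =>
    have IH := ih (by omega)
    have hσ : ((t i ^ a : GenPerm m n).σ ⟨i, hi⟩).val < i + 1 :=
      σ_val_lt (pow_mem (t_mem_fixingFrom i) a) (by simp)
    have hm := Nat.mul_sub_one_add_self (i + 1) (NeZero.one_le : 1 ≤ m)
    rw [pow_succ', t_mul_σ_val hi, t_mul_c hi]
    by_cases h0 : ((t i ^ a : GenPerm m n).σ ⟨i, hi⟩).val = 0
    · have hc : ((t i ^ a : GenPerm m n).c ⟨i, hi⟩).val ≠ m - 1 := by
        intro h
        rw [h, h0] at IH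
        omega
      rw [if_pos h0, if_pos h0, add_comm (1 : ZMod m), ZMod.val_add_one_eq_ite, if_neg hc, mul_add]
      omega
    · rw [if_neg h0, if_neg h0, if_pos (by omega), zero_add]
      omega

lemma fmaj_t_pow_mul (hi : i < n) {ρ : GenPerm m n} (hρ : ρ ∈ fixingFrom i) {a : ℕ}
    (ha : a < m * (i + 1)) : fmaj (t i ^ a * ρ) = fmaj ρ + a := by
  induction a with
  | zero => simp
  | succ a ih =>
    have hmem : t i ^ a * ρ ∈ fixingFrom (i + 1) :=
      mul_mem (pow_mem (t_mem_fixingFrom i) a) (fixingFrom_mono (by omega) hρ)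
    obtain ⟨hσ, hc⟩ := t_pow_mul_apply_self hi hρ a
    have hx : ¬(((t i ^ a * ρ).σ ⟨i, hi⟩).val = 0 ∧ ((t i ^ a * ρ).c ⟨i, hi⟩).val = m - 1) := by
      rintro ⟨h0, hw⟩
      have := t_pow_entry (m := m) hi (a := a) (by omega)
      have hm := Nat.mul_sub_one_add_self (i + 1) (NeZero.one_le : 1 ≤ m)
      rw [← hσ, ← hc, h0, hw] at this
      omega
    rw [pow_succ', mul_assoc, fmaj_t_mul hi hmem hx, ih (by omega), add_assoc]

lemma t_pow_mul_inj (hi : i < n) {ρ ρ' : GenPerm m n} (hρ : ρ ∈ fixingFrom i)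
    (hρ' : ρ' ∈ fixingFrom i) {a b : ℕ} (ha : a < m * (i + 1)) (hb : b < m * (i + 1))
    (h : t i ^ a * ρ = t i ^ b * ρ') :
    a = b ∧ ρ = ρ' := by
  obtain ⟨hσ, hc⟩ := t_pow_mul_apply_self hi hρ a
  obtain ⟨hσ', hc'⟩ := t_pow_mul_apply_self hi hρ' b
  have hab : a = b := by
    rw [← t_pow_entry hi ha, ← t_pow_entry hi hb, ← hσ, ← hc, ← hσ', ← hc', h]
  subst hab
  exact ⟨rfl, mul_left_cancel h⟩

end Powers

def partialRep (k : ℕ → ℕ) : ℕ → GenPerm m n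
  | 0 => 1
  | N + 1 => t N ^ k N * partialRep k N

lemma partialRep_mem (k : ℕ → ℕ) (N : ℕ) :
    (partialRep k N : GenPerm m n) ∈ fixingFrom N := by
  induction N with
  | zero => exact one_mem _
  | succ N ih =>
    exact mul_mem (pow_mem (t_mem_fixingFrom N) _) (fixingFrom_mono (Nat.le_succ N) ih)

section PartialRep

variable [NeZero m] {k k' : ℕ → ℕ}

lemma fmaj_partialRep {N : ℕ} (hN : N ≤ n) (hk : ∀ j < N, k j < m * (j + 1)) :
    fmaj (partialRep k N : GenPerm m n) = ∑ j ∈ range N, k j := by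
  induction N with
  | zero => exact fmaj_one
  | succ N ih =>
    rw [partialRep, fmaj_t_pow_mul (by omega) (partialRep_mem k N) (hk N (by omega)),
      ih (by omega) fun j hj => hk j (by omega), sum_range_succ]

lemma eq_of_partialRep_eq {N : ℕ} (hN : N ≤ n) (hk : ∀ j < N, k j < m * (j + 1))
    (hk' : ∀ j < N, k' j < m * (j + 1))
    (h : (partialRep k N : GenPerm m n) = partialRep k' N) : ∀ j < N, k j = k' j := by
  induction N with
  | zero => intro j hj; omega
  | succ N ih =>
    obtain ⟨hkN, hrest⟩ := t_pow_mul_inj (by omega) (partialRep_mem k N) (partialRep_mem k' N)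
      (hk N (by omega)) (hk' N (by omega)) h
    intro j hj
    rcases Nat.lt_succ_iff_lt_or_eq.mp hj with hj | rfl
    · exact ih (by omega) (fun j hj => hk j (by omega)) (fun j hj => hk' j (by omega)) hrest j hj
    · exact hkN

end PartialRep

lemma prod_reverse_ofFn_t_pow (k : ℕ → ℕ) (N : ℕ) :
    (List.ofFn fun i : Fin N => (t i ^ k i : GenPerm m n)).reverse.prod = partialRep k N := by
  induction N with
  | zero => rfl
  | succ N ih =>
    rw [List.ofFn_succ', List.concat_eq_append, List.reverse_append, List.reverse_singleton,
      List.singleton_append, List.prod_cons]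
    simp only [Fin.val_castSucc, Fin.val_last, ih]
    rfl

lemma rep_eq_partialRep (k : Fin n → ℕ) :
    (rep k : GenPerm m n) = partialRep (fun j => if h : j < n then k ⟨j, h⟩ else 0) n := by
  rw [← prod_reverse_ofFn_t_pow, rep]
  simp only [Fin.is_lt, dif_pos, Fin.eta]

section Rep

variable [NeZero m]

lemma fmaj_rep {k : Fin n → ℕ} (hk : ∀ i : Fin n, k i < m * ((i : ℕ) + 1)) :
    fmaj (rep k : GenPerm m n) = ∑ i, k i := by
  rw [rep_eq_partialRep, fmaj_partialRep le_rfl fun j hj => by rw [dif_pos hj]; exact hk _,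
    ← Fin.sum_univ_eq_sum_range]
  simp only [Fin.is_lt, dif_pos, Fin.eta]

lemma rep_injective :
    Function.Injective fun x : (∀ i : Fin n, Fin (m * ((i : ℕ) + 1))) =>
      (rep fun i => (x i).val : GenPerm m n) := by
  intro x y h
  simp only [rep_eq_partialRep] at h
  have hxy := eq_of_partialRep_eq le_rfl (fun j hj => by rw [dif_pos hj]; exact (x _).isLt)
    (fun j hj => by rw [dif_pos hj]; exact (y _).isLt) h
  funext i
  exact Fin.ext (by simpa using hxy i i.isLt)

lemma card_eq_prod : Fintype.card (GenPerm m n) = ∏ i : Fin n, m * ((i : ℕ) + 1) := by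
  rw [Fintype.ofEquiv_card, Fintype.card_prod, Fintype.card_perm, Fintype.card_fun, ZMod.card,
    Fintype.card_fin, prod_mul_distrib, prod_const, card_univ, Fintype.card_fin,
    Fin.prod_univ_eq_prod_range (· + 1), prod_range_add_one_eq_factorial, mul_comm]

lemma exists_rep (π : GenPerm m n) :
    ∃ k : Fin n → ℕ, (∀ i : Fin n, k i < m * ((i : ℕ) + 1)) ∧ π = rep k := by
  have hcard :
      Fintype.card (∀ i : Fin n, Fin (m * ((i : ℕ) + 1))) = Fintype.card (GenPerm m n) := by
    rw [card_eq_prod, Fintype.card_pi]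
    simp only [Fintype.card_fin]
  obtain ⟨x, hx⟩ := ((Fintype.bijective_iff_injective_and_card _).mpr ⟨rep_injective, hcard⟩).2 π
  exact ⟨fun i => x i, fun i => (x i).isLt, hx.symm⟩

end Rep

/-- the combinatorial formula
`flag-major(π) = m · maj(π) + Σ_{j=0}^{m-1} j · #{i : phase of π(i) is ω^j}`,
where `maj` is taken with respect to the order
`1·ω^{m-1} < ⋯ < n·ω^{m-1} < ⋯ < 1·ω < ⋯ < n·ω < 1 < ⋯ < n`. -/
theorem flagMajor_eq (m n : ℕ) (hm : 0 < m) (π : GenPerm m n) :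
    flagMajor π = m * majG π +
      ∑ j ∈ Finset.range m,
        j * (Finset.univ.filter (fun i : Fin n => (π.c i).val = j)).card := by
  have : NeZero m := ⟨hm.ne'⟩
  have hex := exists_rep π
  obtain ⟨hk, hπ⟩ := hex.choose_spec
  rw [flagMajor, dif_pos hex, ← fmaj_rep hk, ← hπ, fmaj, colorSum_eq_sum_range]

end GenPerm
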